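/- arXiv:2407.15162 — 2 statements merged into one kernel-verified Lean document; each statement's English description precedes it below -/
import Mathlib

section
/- Let d ≥ 2 be an integer, let H be an infinite, connected, locally finite graph, let α ∈ (0, 1], and let m ≥ 1 be a real number. Suppose that every finite connected subset S̃ of the vertices of H with |S̃| ≥ m satisfies |∂_H S̃| ≥ α·|S̃|^{1−1/d}. Then every nonempty finite subset S of the vertices of H with |S| ≥ m^d satisfies |∂_H S| ≥ (α/2)·|S|^{1−1/d}. -/
/-- The edge boundary `∂_H S` of a vertex set `S` in the graph `H`: edges of `H` with one
endpoint in `S` and the other endpoint outside `S`. -/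
def edgeBoundary {V : Type*} (H : SimpleGraph V) (S : Set V) : Set (Sym2 V) :=
  {e | e ∈ H.edgeSet ∧ ∃ x ∈ S, ∃ y ∉ S, e = s(x, y)}

lemma mem_edgeBoundary_iff {V : Type*} {H : SimpleGraph V} {A : Set V} {e : Sym2 V} :
    e ∈ edgeBoundary H A ↔ ∃ x y, H.Adj x y ∧ x ∈ A ∧ y ∉ A ∧ e = s(x, y) := by
  constructor
  · rintro ⟨he, x, hx, y, hy, rfl⟩
    exact ⟨x, y, H.mem_edgeSet.1 he, hx, hy, rfl⟩
  · rintro ⟨x, y, hadj, hx, hy, rfl⟩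
    exact ⟨H.mem_edgeSet.2 hadj, x, hx, y, hy, rfl⟩

lemma edgeBoundary_finite {V : Type*} {H : SimpleGraph V}
    (hlf : ∀ v : V, (H.neighborSet v).Finite) {A : Set V} (hA : A.Finite) :
    (edgeBoundary H A).Finite := by
  have h1 : edgeBoundary H A ⊆ (fun p : V × V => s(p.1, p.2)) '' (A ×ˢ (⋃ x ∈ A, H.neighborSet x)) := by
    rintro e he
    obtain ⟨x, y, hadj, hx, hy, rfl⟩ := mem_edgeBoundary_iff.1 he
    exact ⟨(x, y), ⟨hx, Set.mem_biUnion hx hadj⟩, rfl⟩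
  exact (((hA.prod (hA.biUnion fun x _ => hlf x))).image _).subset h1

lemma walk_cross {V : Type*} {H : SimpleGraph V} {x y : V} (p : H.Walk x y) :
    ∀ C : Set V, x ∈ C → y ∉ C → ∃ a b, H.Adj a b ∧ a ∈ C ∧ b ∉ C := by
  induction p with
  | nil => intro C hx hy; exact absurd hx hy
  | @cons u v w h p ih =>
    intro C hx hy
    by_cases hw : v ∈ C
    · exact ih C hw hy
    · exact ⟨_, _, h, hx, hw⟩


/-- `S` is connected in `H`: the subgraph of `H` induced on `S` is connected, i.e. any two
vertices of `S` are joined by a path staying in `S`. -/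
def ConnectedOn {V : Type*} (H : SimpleGraph V) (S : Set V) : Prop :=
  ∀ x ∈ S, ∀ y ∈ S, Relation.ReflTransGen (fun a b => a ∈ S ∧ b ∈ S ∧ H.Adj a b) x y

section Comp

variable {V : Type*} {H : SimpleGraph V} {S' : Set V} {x : V}

/-- The connected component of `x` within `S'`. -/
def comp (H : SimpleGraph V) (S' : Set V) (x : V) : Set V :=
  {y | Relation.ReflTransGen (fun a b => a ∈ S' ∧ b ∈ S' ∧ H.Adj a b) x y}

lemma mem_comp_self : x ∈ comp H S' x := Relation.ReflTransGen.refl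

lemma comp_subset (hx : x ∈ S') : comp H S' x ⊆ S' := by
  intro y hy
  induction hy with
  | refl => exact hx
  | tail _ step _ => exact step.2.1

lemma comp_closed (hx : x ∈ S') {a b : V} (ha : a ∈ comp H S' x) (hb : b ∈ S')
    (hadj : H.Adj a b) : b ∈ comp H S' x :=
  ha.tail ⟨comp_subset hx ha, hb, hadj⟩

lemma comp_connectedOn (hx : x ∈ S') : ConnectedOn H (comp H S' x) := by
  have hsymm : Symmetric (fun a b => a ∈ comp H S' x ∧ b ∈ comp H S' x ∧ H.Adj a b) :=
    fun a b h => ⟨h.2.1, h.1, h.2.2.symm⟩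
  have key : ∀ w ∈ comp H S' x,
      Relation.ReflTransGen (fun a b => a ∈ comp H S' x ∧ b ∈ comp H S' x ∧ H.Adj a b) x w := by
    intro w hw
    induction hw with
    | refl => exact Relation.ReflTransGen.refl
    | @tail c w' hc step ih =>
      exact ih.tail ⟨hc, hc.tail step, step.2.2⟩
  intro y hy z hz
  exact ((@Relation.ReflTransGen.stdSymm _ _ ⟨hsymm⟩).symm _ _ (key y hy)).trans (key z hz)

lemma edgeBoundary_comp_subset (hx : x ∈ S') :
    edgeBoundary H (comp H S' x) ⊆ edgeBoundary H S' := by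
  intro e he
  obtain ⟨a, b, hadj, ha, hb, rfl⟩ := mem_edgeBoundary_iff.1 he
  refine mem_edgeBoundary_iff.2 ⟨a, b, hadj, comp_subset hx ha, fun hbS => ?_, rfl⟩
  exact hb (comp_closed hx ha hbS hadj)

lemma edgeBoundary_diff_comp_subset (hx : x ∈ S') :
    edgeBoundary H (S' \ comp H S' x) ⊆ edgeBoundary H S' := by
  intro e he
  obtain ⟨a, b, hadj, ha, hb, rfl⟩ := mem_edgeBoundary_iff.1 he
  refine mem_edgeBoundary_iff.2 ⟨a, b, hadj, ha.1, fun hbS => ?_, rfl⟩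
  refine hb ⟨hbS, fun hbC => ?_⟩
  -- b ∈ comp, a ∈ S', adj b a so a ∈ comp, contradiction with ha.2
  exact ha.2 (comp_closed hx hbC ha.1 hadj.symm)

lemma edgeBoundary_disjoint_comp (hx : x ∈ S') :
    Disjoint (edgeBoundary H (comp H S' x)) (edgeBoundary H (S' \ comp H S' x)) := by
  rw [Set.disjoint_left]
  intro e he1 he2
  obtain ⟨a, b, hadj, ha, hb, rfl⟩ := mem_edgeBoundary_iff.1 he1
  obtain ⟨a', b', hadj', ha', hb', heq⟩ := mem_edgeBoundary_iff.1 he2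
  rw [Sym2.eq_iff] at heq
  rcases heq with ⟨rfl, rfl⟩ | ⟨rfl, rfl⟩
  · exact ha'.2 ha
  · exact hb (comp_closed hx ha ha'.1 hadj)

lemma edgeBoundary_comp_nonempty [Infinite V] (hconn : H.Connected) (hS' : S'.Finite)
    (hx : x ∈ S') : (edgeBoundary H (comp H S' x)).Nonempty := by
  have hCfin : (comp H S' x).Finite := hS'.subset (comp_subset hx)
  obtain ⟨y, hy⟩ := hCfin.infinite_compl.nonempty
  obtain ⟨p⟩ := hconn.preconnected x y
  obtain ⟨a, b, hadj, ha, hb⟩ := walk_cross p _ mem_comp_self hy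
  exact ⟨s(a, b), mem_edgeBoundary_iff.2 ⟨a, b, hadj, ha, hb, rfl⟩⟩

end Comp

section Key

variable {V : Type*} [Infinite V] {H : SimpleGraph V}

lemma comp_bound {d : ℕ} (hd : 2 ≤ d) {α m β : ℝ} (hα0 : 0 < α) (hα1 : α ≤ 1)
    (hm : 1 ≤ m) (hmβ : m ≤ β)
    (hiso : ∀ S : Set V, S.Finite → ConnectedOn H S → m ≤ (S.ncard : ℝ) →
      α * (S.ncard : ℝ) ^ (1 - 1 / (d : ℝ)) ≤ ((edgeBoundary H S).ncard : ℝ))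
    {C : Set V} (hCfin : C.Finite) (hCne : C.Nonempty) (hCconn : ConnectedOn H C)
    (hCub : ((C.ncard : ℝ)) ^ (1 / (d : ℝ)) ≤ β)
    (hEne : (edgeBoundary H C).Nonempty) (hEfin : (edgeBoundary H C).Finite) :
    α * (C.ncard : ℝ) ≤ β * ((edgeBoundary H C).ncard : ℝ) := by
  set c : ℝ := (C.ncard : ℝ) with hc
  have hc0 : 0 < c := by
    rw [hc]
    exact_mod_cast (Set.ncard_pos hCfin).2 hCne
  have hB1 : (1 : ℝ) ≤ ((edgeBoundary H C).ncard : ℝ) := by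
    have := (Set.ncard_pos hEfin).2 hEne
    exact_mod_cast this
  by_cases hbig : m ≤ c
  · have h1 := hiso C hCfin hCconn hbig
    have h2 : α * c = (α * c ^ (1 - 1 / (d : ℝ))) * c ^ (1 / (d : ℝ)) := by
      rw [mul_assoc, ← Real.rpow_add hc0]
      norm_num
    rw [h2]
    calc (α * c ^ (1 - 1 / (d : ℝ))) * c ^ (1 / (d : ℝ))
        ≤ ((edgeBoundary H C).ncard : ℝ) * β := by
          apply mul_le_mul h1 hCub (Real.rpow_nonneg hc0.le _)
          positivity
      _ = β * ((edgeBoundary H C).ncard : ℝ) := mul_comm _ _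
  · push_neg at hbig
    have hcβ : c ≤ β := le_trans hbig.le hmβ
    calc α * c ≤ 1 * c := by nlinarith
      _ = c := one_mul c
      _ ≤ β := hcβ
      _ = β * 1 := (mul_one β).symm
      _ ≤ β * ((edgeBoundary H C).ncard : ℝ) := by
          apply mul_le_mul_of_nonneg_left hB1
          linarith [hm, hmβ]

lemma key_induction (hconn : H.Connected) (hlf : ∀ v : V, (H.neighborSet v).Finite)
    {d : ℕ} (hd : 2 ≤ d) {α m β : ℝ} (hα0 : 0 < α) (hα1 : α ≤ 1)
    (hm : 1 ≤ m) (hmβ : m ≤ β)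
    (hiso : ∀ S : Set V, S.Finite → ConnectedOn H S → m ≤ (S.ncard : ℝ) →
      α * (S.ncard : ℝ) ^ (1 - 1 / (d : ℝ)) ≤ ((edgeBoundary H S).ncard : ℝ))
    {S : Set V} (hS : S.Finite) (hβ : ((S.ncard : ℝ)) ^ (1 / (d : ℝ)) ≤ β) :
    ∀ k : ℕ, ∀ S' : Set V, S' ⊆ S → S'.ncard ≤ k →
      α * (S'.ncard : ℝ) ≤ β * ((edgeBoundary H S').ncard : ℝ) := by
  intro k
  induction k with
  | zero =>
    intro S' hsub hcard
    have hfin : S'.Finite := hS.subset hsub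
    have : S' = ∅ := by
      rw [← Set.ncard_eq_zero hfin]; omega
    subst this
    simp only [Set.ncard_empty, Nat.cast_zero, mul_zero]
    have hβ0 : (0:ℝ) ≤ β := le_trans (le_trans zero_le_one hm) hmβ
    exact mul_nonneg hβ0 (Nat.cast_nonneg _)
  | succ k ih =>
    intro S' hsub hcard
    have hfin : S'.Finite := hS.subset hsub
    rcases S'.eq_empty_or_nonempty with rfl | ⟨x, hx⟩
    · simp only [Set.ncard_empty, Nat.cast_zero, mul_zero]
      have hβ0 : (0:ℝ) ≤ β := le_trans (le_trans zero_le_one hm) hmβ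
      exact mul_nonneg hβ0 (Nat.cast_nonneg _)
    set C : Set V := comp H S' x with hCdef
    have hCS' : C ⊆ S' := comp_subset hx
    have hCfin : C.Finite := hfin.subset hCS'
    have hCne : C.Nonempty := ⟨x, mem_comp_self⟩
    have hEfin : (edgeBoundary H C).Finite := edgeBoundary_finite hlf hCfin
    have hEfinD : (edgeBoundary H (S' \ C)).Finite := edgeBoundary_finite hlf hfin.diff
    have hEfinS : (edgeBoundary H S').Finite := edgeBoundary_finite hlf hfin
    have hCub : ((C.ncard : ℝ)) ^ (1 / (d : ℝ)) ≤ β := by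
      refine le_trans ?_ hβ
      apply Real.rpow_le_rpow (by positivity) ?_ (by positivity)
      exact_mod_cast Set.ncard_le_ncard (hCS'.trans hsub) hS
    have hbound := comp_bound hd hα0 hα1 hm hmβ hiso hCfin hCne
      (comp_connectedOn hx) hCub (edgeBoundary_comp_nonempty hconn hfin hx) hEfin
    -- cardinal split
    have hsplit : (S' \ C).ncard + C.ncard = S'.ncard :=
      Set.ncard_diff_add_ncard_of_subset hCS' hfin
    have hdlt : (S' \ C).ncard ≤ k := by
      have hCpos : 0 < C.ncard := (Set.ncard_pos hCfin).2 hCne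
      omega
    have hih := ih (S' \ C) ((Set.diff_subset).trans hsub) hdlt
    -- boundary inequality
    have hunion : (edgeBoundary H C).ncard + (edgeBoundary H (S' \ C)).ncard
        ≤ (edgeBoundary H S').ncard := by
      rw [← Set.ncard_union_eq (edgeBoundary_disjoint_comp hx) hEfin hEfinD]
      exact Set.ncard_le_ncard
        (Set.union_subset (edgeBoundary_comp_subset hx) (edgeBoundary_diff_comp_subset hx))
        hEfinS
    have hβ0 : (0:ℝ) < β := lt_of_lt_of_le (lt_of_lt_of_le one_pos hm) hmβ
    have hcast : (S'.ncard : ℝ) = ((S' \ C).ncard : ℝ) + (C.ncard : ℝ) := by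
      exact_mod_cast congrArg (Nat.cast (R := ℝ)) hsplit.symm
    have hcastU : ((edgeBoundary H C).ncard : ℝ) + ((edgeBoundary H (S' \ C)).ncard : ℝ)
        ≤ ((edgeBoundary H S').ncard : ℝ) := by exact_mod_cast hunion
    calc α * (S'.ncard : ℝ)
        = α * ((S' \ C).ncard : ℝ) + α * (C.ncard : ℝ) := by rw [hcast]; ring
      _ ≤ β * ((edgeBoundary H (S' \ C)).ncard : ℝ) + β * ((edgeBoundary H C).ncard : ℝ) := by
          exact add_le_add hih hbound
      _ = β * (((edgeBoundary H C).ncard : ℝ) + ((edgeBoundary H (S' \ C)).ncard : ℝ)) := by ring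
      _ ≤ β * ((edgeBoundary H S').ncard : ℝ) := by
          exact mul_le_mul_of_nonneg_left hcastU hβ0.le

end Key


/-- From an isoperimetric inequality for finite connected vertex sets of size at least `m`
in an infinite, connected, locally finite graph `H`, one deduces (at the cost of a factor
`1/2` in the constant) the same isoperimetric inequality for all finite vertex sets of size
at least `m^d`. -/
theorem isoperimetry_of_connected_isoperimetry (d : ℕ) (hd : 2 ≤ d)
    (V : Type*) [Infinite V] (H : SimpleGraph V)
    (hconn : H.Connected) (hlf : ∀ v : V, (H.neighborSet v).Finite)
    (α : ℝ) (hα0 : 0 < α) (hα1 : α ≤ 1) (m : ℝ) (hm : 1 ≤ m)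
    (hiso : ∀ S : Set V, S.Finite → ConnectedOn H S → m ≤ (S.ncard : ℝ) →
      α * (S.ncard : ℝ) ^ (1 - 1 / (d : ℝ)) ≤ ((edgeBoundary H S).ncard : ℝ)) :
    ∀ S : Set V, S.Finite → S.Nonempty → m ^ d ≤ (S.ncard : ℝ) →
      (α / 2) * (S.ncard : ℝ) ^ (1 - 1 / (d : ℝ)) ≤ ((edgeBoundary H S).ncard : ℝ) := by
  intro S hS hne hcard
  have hm0 : (0:ℝ) < m := lt_of_lt_of_le one_pos hm
  set n : ℝ := (S.ncard : ℝ) with hn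
  have hn0 : (0:ℝ) < n := by
    have h1 : (1:ℝ) ≤ m ^ d := one_le_pow₀ hm
    linarith
  set β : ℝ := n ^ (1 / (d : ℝ)) with hβ
  have hβ0 : (0:ℝ) < β := Real.rpow_pos_of_pos hn0 _
  have hmd : m ^ (d:ℝ) ≤ n := by rw [Real.rpow_natCast]; exact hcard
  have hmβ : m ≤ β := by
    have h2 : (m ^ (d:ℝ)) ^ (1/(d:ℝ)) = m := by
      rw [← Real.rpow_mul hm0.le]
      rw [mul_one_div, div_self (by exact_mod_cast by omega : (d:ℝ) ≠ 0), Real.rpow_one]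
    calc m = (m ^ (d:ℝ)) ^ (1/(d:ℝ)) := h2.symm
      _ ≤ n ^ (1/(d:ℝ)) := Real.rpow_le_rpow (by positivity) hmd (by positivity)
  have hkey := key_induction hconn hlf hd hα0 hα1 hm hmβ hiso hS le_rfl S.ncard S
    (subset_refl S) le_rfl
  set B : ℝ := ((edgeBoundary H S).ncard : ℝ) with hB
  have hfac : n ^ (1 - 1/(d:ℝ)) * β = n := by
    rw [hβ, ← Real.rpow_add hn0]; norm_num
  have hX0 : (0:ℝ) ≤ n ^ (1 - 1/(d:ℝ)) := Real.rpow_nonneg hn0.le _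
  have h3 : α * n ^ (1 - 1/(d:ℝ)) ≤ B := by
    rw [← mul_le_mul_iff_of_pos_right hβ0]
    calc α * n ^ (1 - 1/(d:ℝ)) * β = α * n := by rw [mul_assoc, hfac]
      _ ≤ β * B := hkey
      _ = B * β := mul_comm _ _
  nlinarith
end

section
/- Let C ≥ 1 and t > 0, and define Φ : [0, ∞) → (0, ∞) by Φ(r) := C·exp(−r²/(C·t)) for 0 ≤ r ≤ 2t and Φ(r) := C·exp(−2r/C) for r > 2t. Then there exists a constant C₁ ∈ (1, ∞) depending only on C (not on t or ε) such that for every ε ∈ (0, 1] and every nonnegative random variable X satisfying P(X > r) ≤ min{Φ(r), ε} for all r ≥ 0, one has E[X²] ≤ C₁·ε·(1 + max{t·log(C₁/ε), log²(C₁/ε)}). -/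
set_option maxHeartbeats 2000000

open MeasureTheory Set Filter

lemma tail_deriv (C t : ℝ) (hC : 0 < C) (ht : 0 < t) (x : ℝ) :
    HasDerivAt (fun r => -(C^2*t) * Real.exp (-(r^2)/(C*t)) + -(C^2*r + C^3/2) * Real.exp (-(2*r)/C))
      ((C * Real.exp (-(x^2)/(C*t)) + C * Real.exp (-(2*x)/C)) * (2*x)) x := by
  have h1 : HasDerivAt (fun r : ℝ => -(r^2)/(C*t)) (-(2*x)/(C*t)) x := by
    have := (hasDerivAt_pow 2 x).neg.div_const (C*t)
    simpa using this
  have T1 := (h1.exp).const_mul (-(C^2*t))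
  have h2 : HasDerivAt (fun r : ℝ => -(2*r)/C) (-(2:ℝ)/C) x := by
    have := ((hasDerivAt_id x).const_mul (2:ℝ)).neg.div_const C
    simpa using this
  have lin : HasDerivAt (fun r : ℝ => -(C^2*r + C^3/2)) (-(C^2)) x := by
    have := (((hasDerivAt_id x).const_mul (C^2)).add_const (C^3/2)).neg
    exact this.congr_deriv (by simp)
  have T2 := lin.mul h2.exp
  have T := T1.add T2
  refine T.congr_deriv ?_
  field_simp
  ring

lemma tail_tendsto (C t : ℝ) (hC : 0 < C) (ht : 0 < t) :
    Tendsto (fun r => -(C^2*t) * Real.exp (-(r^2)/(C*t)) + -(C^2*r + C^3/2) * Real.exp (-(2*r)/C)) atTop (nhds 0) := by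
  have hCt : 0 < C * t := mul_pos hC ht
  have hb1 : Tendsto (fun r : ℝ => -(r^2)/(C*t)) atTop atBot := by
    have h := (tendsto_pow_atTop (two_ne_zero)).atTop_mul_const_of_neg
      (show -(1/(C*t)) < 0 by simp [hCt]; positivity)
    refine h.congr fun r => by field_simp
  have hb2 : Tendsto (fun r : ℝ => -(2*r)/C) atTop atBot := by
    have h := (tendsto_id (α := ℝ)).atTop_mul_const_of_neg
      (show -(2/C) < 0 by simp; positivity)
    refine h.congr fun r => by simp only [id_eq, neg_div]; ring
  have he1 : Tendsto (fun r : ℝ => Real.exp (-(r^2)/(C*t))) atTop (nhds 0) :=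
    Real.tendsto_exp_atBot.comp hb1
  have he2 : Tendsto (fun r : ℝ => Real.exp (-(2*r)/C)) atTop (nhds 0) :=
    Real.tendsto_exp_atBot.comp hb2
  have hre : Tendsto (fun r : ℝ => r * Real.exp (-(2*r)/C)) atTop (nhds 0) := by
    have base := Real.tendsto_pow_mul_exp_neg_atTop_nhds_zero 1
    have hφ : Tendsto (fun r : ℝ => 2*r/C) atTop atTop := by
      apply Tendsto.atTop_div_const hC
      exact tendsto_id.const_mul_atTop two_pos
    have comp := (base.comp hφ).const_mul (C/2)
    rw [mul_zero] at comp
    refine comp.congr fun r => ?_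
    simp only [Function.comp_apply, pow_one]
    field_simp
  have h1 : Tendsto (fun r : ℝ => -(C^2*t) * Real.exp (-(r^2)/(C*t))) atTop (nhds 0) := by
    simpa using he1.const_mul (-(C^2*t))
  have h2 : Tendsto (fun r : ℝ => -(C^2*r + C^3/2) * Real.exp (-(2*r)/C)) atTop (nhds 0) := by
    have := (hre.const_mul (-(C^2))).add (he2.const_mul (-(C^3/2)))
    simp only [mul_zero, add_zero] at this
    refine this.congr fun r => by ring
  simpa using h1.add h2

lemma tail_integrable (C t R : ℝ) (hC : 0 < C) (ht : 0 < t) (hR : 0 < R) :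
    IntegrableOn (fun r => (C * Real.exp (-(r^2)/(C*t)) + C * Real.exp (-(2*r)/C)) * (2*r)) (Ioi R) :=
  integrableOn_Ioi_deriv_of_nonneg' (fun x _ => tail_deriv C t hC ht x)
    (fun x hx => by
      have hx0 : 0 < x := lt_trans hR hx
      positivity)
    (tail_tendsto C t hC ht)

lemma tail_integral (C t R : ℝ) (hC : 0 < C) (ht : 0 < t) (hR : 0 < R) :
    ∫ r in Ioi R, (C * Real.exp (-(r^2)/(C*t)) + C * Real.exp (-(2*r)/C)) * (2*r)
      = C^2*t * Real.exp (-(R^2)/(C*t)) + (C^2*R + C^3/2) * Real.exp (-(2*R)/C) := by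
  rw [integral_Ioi_of_hasDerivAt_of_nonneg' (fun x _ => tail_deriv C t hC ht x)
    (fun x hx => by
      have hx0 : 0 < x := lt_trans hR hx
      positivity)
    (tail_tendsto C t hC ht)]
  ring

/-- Second-moment bound from a Gaussian/exponential tail truncated at level `ε`:
with `Φ(r) = C·exp(−r²/(Ct))` for `r ≤ 2t` and `Φ(r) = C·exp(−2r/C)` for `r > 2t`,
there is `C₁ ∈ (1, ∞)` depending only on `C` such that any nonnegative random variable `X`
with `P(X > r) ≤ min{Φ(r), ε}` for all `r ≥ 0` satisfies
`E[X²] ≤ C₁·ε·(1 + max{t·log(C₁/ε), log²(C₁/ε)})`. -/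
theorem second_moment_of_truncated_tail (C : ℝ) (hC : 1 ≤ C) :
    ∃ C₁ : ℝ, 1 < C₁ ∧
      ∀ t : ℝ, 0 < t → ∀ ε : ℝ, 0 < ε → ε ≤ 1 →
        ∀ (Ω : Type) [MeasurableSpace Ω] (P : Measure Ω), IsProbabilityMeasure P →
          ∀ X : Ω → ℝ, Measurable X → (∀ ω, 0 ≤ X ω) →
            (∀ r : ℝ, 0 ≤ r →
              P {ω | r < X ω} ≤ ENNReal.ofReal (min
                (if r ≤ 2 * t then C * Real.exp (-(r ^ 2) / (C * t))
                  else C * Real.exp (-(2 * r) / C)) ε)) →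
            ∫⁻ ω, ENNReal.ofReal (X ω ^ 2) ∂P ≤
              ENNReal.ofReal (C₁ * ε *
                (1 + max (t * Real.log (C₁ / ε)) (Real.log (C₁ / ε) ^ 2))) := by
  have hC0 : (0:ℝ) < C := lt_of_lt_of_le one_pos hC
  have hC4 : (1:ℝ) ≤ C ^ 4 := one_le_pow₀ hC
  refine ⟨100 * C ^ 4, by nlinarith, ?_⟩
  intro t ht ε hε hε1 Ω _ P hP X hXm hX0 htail
  set C₁ : ℝ := 100 * C ^ 4 with hC₁def
  have hC₁pos : 0 < C₁ := by positivity
  set L : ℝ := Real.log (C₁ / ε) with hLdef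
  have hLε : Real.exp (-L) = ε / C₁ := by
    rw [hLdef, Real.exp_neg, Real.exp_log (by positivity), inv_div]
  have hL1 : 1 ≤ L := by
    rw [hLdef, Real.le_log_iff_exp_le (by positivity)]
    have h3 : Real.exp 1 ≤ 3 := by
      have := Real.exp_one_lt_d9
      linarith
    have : (3:ℝ) ≤ C₁ / ε := by
      rw [le_div_iff₀ hε]
      nlinarith
    linarith
  set M : ℝ := max (t * L) (L ^ 2) with hMdef
  have hM2 : L ^ 2 ≤ M := le_max_right _ _
  have hM1 : t * L ≤ M := le_max_left _ _
  have hM0 : 1 ≤ M := le_trans (by nlinarith) hM2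
  have hLM : L ≤ M := le_trans (by nlinarith) hM2
  have htM : t ≤ M := le_trans (by nlinarith) hM1
  set R : ℝ := Real.sqrt (C * t * L) + C / 2 * L with hRdef
  have hCtL : 0 ≤ C * t * L := by positivity
  have hs := Real.sq_sqrt hCtL
  have hsnn := Real.sqrt_nonneg (C * t * L)
  have hRpos : 0 < R := by
    rw [hRdef]
    have : 0 < C / 2 * L := by nlinarith
    linarith
  have hR2low : C * t * L ≤ R ^ 2 := by
    rw [hRdef]
    nlinarith [mul_nonneg hsnn (show (0:ℝ) ≤ C/2*L by positivity), sq_nonneg (C/2*L)]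
  have hRlow : C / 2 * L ≤ R := by rw [hRdef]; linarith
  have hR2ub : R ^ 2 ≤ 2 * (C * t * L) + C ^ 2 / 2 * L ^ 2 := by
    rw [hRdef]
    nlinarith [sq_nonneg (Real.sqrt (C * t * L) - C / 2 * L)]
  have hRub : R ≤ (C * t * L + 1) / 2 + C / 2 * L := by
    rw [hRdef]
    nlinarith [sq_nonneg (Real.sqrt (C * t * L) - 1)]
  clear_value C₁ L M R
  have he1 : Real.exp (-(R ^ 2) / (C * t)) ≤ ε / C₁ := by
    rw [← hLε]
    apply Real.exp_le_exp.2
    rw [neg_div, neg_le_neg_iff, le_div_iff₀ (by positivity)]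
    linear_combination hR2low
  have he2 : Real.exp (-(2 * R) / C) ≤ ε / C₁ := by
    rw [← hLε]
    apply Real.exp_le_exp.2
    rw [neg_div, neg_le_neg_iff, le_div_iff₀ hC0]
    nlinarith [hRlow]
  -- the dominating function
  set h : ℝ → ℝ := fun r => if r ≤ R then ε * (2 * r)
    else (C * Real.exp (-(r ^ 2) / (C * t)) + C * Real.exp (-(2 * r) / C)) * (2 * r) with hhdef
  have hmeas : Measurable h := by
    apply Measurable.ite (measurableSet_le measurable_id measurable_const)
    · fun_prop
    · fun_prop
  -- layer cake
  have layer := lintegral_comp_eq_lintegral_meas_lt_mul P (f := X) (g := fun s => 2 * s)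
    (Eventually.of_forall hX0) hXm.aemeasurable
    (fun s _ => (continuous_const.mul continuous_id).intervalIntegrable 0 s)
    ((ae_restrict_iff' measurableSet_Ioi).2 (Eventually.of_forall fun s hs => by
      exact mul_nonneg (by norm_num) (le_of_lt hs)))
  have hXsq : ∀ ω, (∫ s in (0:ℝ)..X ω, 2 * s) = X ω ^ 2 := by
    intro ω
    rw [intervalIntegral.integral_const_mul, integral_id]
    ring
  simp only [hXsq] at layer
  rw [layer]
  -- integrability of h on Ioi 0
  have int1 : IntegrableOn h (Ioc 0 R) := by
    have c1 : IntegrableOn (fun r : ℝ => ε * (2 * r)) (Ioc 0 R) :=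
      Continuous.integrableOn_Ioc (by fun_prop)
    refine c1.congr_fun (fun r hr => ?_) measurableSet_Ioc
    simp only [hhdef]
    rw [if_pos hr.2]
  have int2 : IntegrableOn h (Ioi R) := by
    refine (tail_integrable C t R hC0 ht hRpos).congr_fun (fun r hr => ?_) measurableSet_Ioi
    simp only [hhdef]
    rw [if_neg (not_le.2 hr)]
  have hunion : Ioc (0:ℝ) R ∪ Ioi R = Ioi 0 := Ioc_union_Ioi_eq_Ioi hRpos.le
  have hint : IntegrableOn h (Ioi 0) := by
    rw [← hunion]
    exact int1.union int2
  have hnn : 0 ≤ᵐ[volume.restrict (Ioi 0)] h := by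
    refine (ae_restrict_iff' measurableSet_Ioi).2 (Eventually.of_forall fun r hr => ?_)
    have hr0 : (0:ℝ) < r := hr
    simp only [hhdef]
    split
    · have : (0:ℝ) ≤ 2 * r := by linarith
      positivity
    · have : (0:ℝ) ≤ 2 * r := by linarith
      positivity
  calc ∫⁻ r in Ioi 0, P {ω | r < X ω} * ENNReal.ofReal (2 * r)
      ≤ ∫⁻ r in Ioi 0, ENNReal.ofReal (h r) := by
        apply setLIntegral_mono (ENNReal.measurable_ofReal.comp hmeas)
        intro r hr
        have hr0 : (0:ℝ) < r := hr
        have hb := htail r hr0.le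
        have hΦpos : 0 < (if r ≤ 2 * t then C * Real.exp (-(r ^ 2) / (C * t))
            else C * Real.exp (-(2 * r) / C)) := by
          split <;> positivity
        have hmin0 : 0 ≤ min (if r ≤ 2 * t then C * Real.exp (-(r ^ 2) / (C * t))
            else C * Real.exp (-(2 * r) / C)) ε := le_min hΦpos.le hε.le
        calc P {ω | r < X ω} * ENNReal.ofReal (2 * r)
            ≤ ENNReal.ofReal (min (if r ≤ 2 * t then C * Real.exp (-(r ^ 2) / (C * t))
                else C * Real.exp (-(2 * r) / C)) ε) * ENNReal.ofReal (2 * r) :=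
              mul_le_mul_left hb _
          _ = ENNReal.ofReal ((min (if r ≤ 2 * t then C * Real.exp (-(r ^ 2) / (C * t))
                else C * Real.exp (-(2 * r) / C)) ε) * (2 * r)) :=
              (ENNReal.ofReal_mul hmin0).symm
          _ ≤ ENNReal.ofReal (h r) := by
              apply ENNReal.ofReal_le_ofReal
              simp only [hhdef]
              by_cases hrR : r ≤ R
              · rw [if_pos hrR]
                apply mul_le_mul_of_nonneg_right (min_le_right _ _) (by linarith)
              · rw [if_neg hrR]
                apply mul_le_mul_of_nonneg_right ?_ (by linarith)
                refine le_trans (min_le_left _ _) ?_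
                split
                · have : 0 < C * Real.exp (-(2 * r) / C) := by positivity
                  linarith
                · have : 0 < C * Real.exp (-(r ^ 2) / (C * t)) := by positivity
                  linarith
    _ = ENNReal.ofReal (∫ r in Ioi 0, h r) :=
        (ofReal_integral_eq_lintegral_ofReal hint hnn).symm
    _ ≤ ENNReal.ofReal (C₁ * ε * (1 + M)) := by
        apply ENNReal.ofReal_le_ofReal
        have hsplit : ∫ r in Ioi 0, h r = (∫ r in Ioc 0 R, h r) + ∫ r in Ioi R, h r := by
          rw [← hunion]
          exact setIntegral_union (Ioc_disjoint_Ioi le_rfl) measurableSet_Ioi int1 int2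
        have hI1 : ∫ r in Ioc 0 R, h r = ε * R ^ 2 := by
          rw [setIntegral_congr_fun measurableSet_Ioc
            (g := fun r => ε * (2 * r)) (fun r hr => by simp only [hhdef]; rw [if_pos hr.2])]
          rw [← intervalIntegral.integral_of_le hRpos.le,
            intervalIntegral.integral_const_mul, intervalIntegral.integral_const_mul,
            integral_id]
          ring
        have hI2 : ∫ r in Ioi R, h r
            = C^2*t * Real.exp (-(R^2)/(C*t)) + (C^2*R + C^3/2) * Real.exp (-(2*R)/C) := by
          rw [setIntegral_congr_fun measurableSet_Ioi
            (g := fun r => (C * Real.exp (-(r ^ 2) / (C * t)) + C * Real.exp (-(2 * r) / C)) * (2 * r))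
            (fun r hr => by simp only [hhdef]; rw [if_neg (not_le.2 hr)])]
          exact tail_integral C t R hC0 ht hRpos
        rw [hsplit, hI1, hI2]
        -- scalar estimate
        have e1nn : 0 ≤ Real.exp (-(R^2)/(C*t)) := (Real.exp_pos _).le
        have e2nn : 0 ≤ Real.exp (-(2*R)/C) := (Real.exp_pos _).le
        have b1 : ε * R ^ 2 ≤ 3 * C ^ 2 * ε * M := by
          have k1 : ε * R ^ 2 ≤ ε * (2 * (C * t * L) + C ^ 2 / 2 * L ^ 2) :=
            mul_le_mul_of_nonneg_left hR2ub hε.le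
          have k2 : 2 * (C * t * L) + C ^ 2 / 2 * L ^ 2 ≤ 2 * C * M + C ^ 2 / 2 * M := by
            nlinarith [mul_le_mul_of_nonneg_left hM1 (show (0:ℝ) ≤ 2 * C by positivity),
              mul_le_mul_of_nonneg_left hM2 (show (0:ℝ) ≤ C ^ 2 / 2 by positivity)]
          have k3 : 2 * C * M + C ^ 2 / 2 * M ≤ 3 * C ^ 2 * M := by
            nlinarith [mul_le_mul_of_nonneg_right (show 2 * C + C ^ 2 / 2 ≤ 3 * C ^ 2 by nlinarith) (le_trans zero_le_one hM0)]
          nlinarith [mul_le_mul_of_nonneg_left (le_trans k2 k3) hε.le]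
        have b2 : C ^ 2 * t * Real.exp (-(R^2)/(C*t)) ≤ ε * M := by
          have k1 : C ^ 2 * t * Real.exp (-(R^2)/(C*t)) ≤ C ^ 2 * t * (ε / C₁) :=
            mul_le_mul_of_nonneg_left he1 (by positivity)
          have k2 : C ^ 2 * t * (ε / C₁) = (C ^ 2 / C₁) * (t * ε) := by
            field_simp
          have k3 : C ^ 2 / C₁ ≤ 1 := by
            rw [div_le_one hC₁pos, hC₁def]
            nlinarith
          have k4 : (C ^ 2 / C₁) * (t * ε) ≤ 1 * (t * ε) :=
            mul_le_mul_of_nonneg_right k3 (by positivity)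
          have k5 : t * ε ≤ M * ε := mul_le_mul_of_nonneg_right htM hε.le
          nlinarith
        have b3 : (C^2*R + C^3/2) * Real.exp (-(2*R)/C) ≤ ε * M := by
          have hB : C ^ 2 * R + C ^ 3 / 2 ≤ 2 * C ^ 3 * M := by
            nlinarith [mul_le_mul_of_nonneg_left hRub (show (0:ℝ) ≤ C ^ 2 by positivity),
              mul_le_mul_of_nonneg_left hM1 (show (0:ℝ) ≤ C ^ 3 / 2 by positivity),
              mul_le_mul_of_nonneg_left hLM (show (0:ℝ) ≤ C ^ 3 / 2 by positivity),
              mul_le_mul_of_nonneg_left hM0 (show (0:ℝ) ≤ C ^ 3 / 2 by positivity),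
              hC4, hM0]
          have hBnn : 0 ≤ C ^ 2 * R + C ^ 3 / 2 := by positivity
          have k1 : (C^2*R + C^3/2) * Real.exp (-(2*R)/C) ≤ (C^2*R + C^3/2) * (ε / C₁) :=
            mul_le_mul_of_nonneg_left he2 hBnn
          have k2 : (C^2*R + C^3/2) * (ε / C₁) ≤ 2 * C ^ 3 * M * (ε / C₁) :=
            mul_le_mul_of_nonneg_right hB (by positivity)
          have k3 : 2 * C ^ 3 * M * (ε / C₁) = (2 * C ^ 3 / C₁) * (M * ε) := by
            field_simp
          have k4 : 2 * C ^ 3 / C₁ ≤ 1 := by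
            rw [div_le_one hC₁pos, hC₁def]
            nlinarith
          have k5 : (2 * C ^ 3 / C₁) * (M * ε) ≤ 1 * (M * ε) :=
            mul_le_mul_of_nonneg_right k4 (by positivity)
          nlinarith
        have hεM : 0 ≤ ε * M := by positivity
        have hfin : 3 * C ^ 2 * ε * M + ε * M + ε * M ≤ C₁ * ε * (1 + M) := by
          rw [hC₁def]
          nlinarith [mul_nonneg hε.le (le_trans zero_le_one hM0),
            mul_nonneg (mul_nonneg hε.le (le_trans zero_le_one hM0)) (sub_nonneg.2 hC4),
            mul_nonneg hε.le (sub_nonneg.2 hC4)]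
        linarith
end
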